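/- arXiv:2002.07066 — 3 statements merged into one kernel-verified Lean document; each statement's English description precedes it below -/
import Mathlib

section
/- For any ε > 0 there exist two pairs of 2×2 payoff matrices u = (u₁,u₂) and u' = (u₁',u₂'), each defining a general-sum game with a unique CCE, such that max_j max_{a,b} |u_j(a,b) − u_j'(a,b)| ≤ 2ε but the unique CCE values satisfy max_{i∈{1,2}} |V_i(u) − V_i(u')| ≥ 1. In particular, the CCE value of a general-sum game is not a Lipschitz function of the payoff matrices. -/
/-!
Both games are separable, `u₁ a b = f a + g b` and `u₂ a b = h a + k b`, so a player's regret
against a fixed deviation involves only the marginal of that player's own action. If `f` has a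
strict maximum at `a₀` and `k` a strict minimum at `b₀`, nonpositive regret forces both marginals
to be point masses, and the pure profile `(a₀, b₀)` is the unique CCE. Changing the payoffs by
`2ε` moves the strict maximum of `f` from the top row to the bottom one and the strict minimum of
`k` from the left column to the right one, so the unique CCE jumps from `(0, 0)` to `(1, 1)` and
player 1's value drops from `1 + ε` to `0`.
-/

open Finset

/-- `σ` is a probability distribution on `A × A`. -/
def IsJointDist {A : Type*} [Fintype A] (σ : A × A → ℝ) : Prop :=
  (∀ p, 0 ≤ σ p) ∧ ∑ p : A × A, σ p = 1

/-- `σ` is a coarse correlated equilibrium of the general-sum game `(u₁, u₂)`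
(player 1 maximizes `u₁`, player 2 minimizes `u₂`). -/
def IsCCE {A : Type*} [Fintype A] (σ : A × A → ℝ) (u1 u2 : A → A → ℝ) : Prop :=
  (∀ a' : A, ∑ p : A × A, σ p * u1 a' p.2 ≤ ∑ p : A × A, σ p * u1 p.1 p.2) ∧
  (∀ b' : A, ∑ p : A × A, σ p * u2 p.1 p.2 ≤ ∑ p : A × A, σ p * u2 p.1 b')

theorem weight_eq_zero_of_sum_mul_nonpos {ι : Type*} [Fintype ι] {w g : ι → ℝ}
    (hw : ∀ i, 0 ≤ w i) (hg : ∀ i, 0 ≤ g i) (hsum : ∑ i, w i * g i ≤ 0) {i : ι}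
    (hi : 0 < g i) : w i = 0 := by
  have hterm : ∀ j ∈ univ, 0 ≤ w j * g j := fun j _ => mul_nonneg (hw j) (hg j)
  have hzero := (sum_eq_zero_iff_of_nonneg hterm).1 (hsum.antisymm (sum_nonneg hterm)) i
    (mem_univ i)
  exact (mul_eq_zero.1 hzero).resolve_right hi.ne'

theorem eq_pi_single_of_sum_eq_one {ι : Type*} [Fintype ι] [DecidableEq ι] {w : ι → ℝ}
    (hw : ∑ i, w i = 1) {x : ι} (hsupp : ∀ i ≠ x, w i = 0) : w = Pi.single x 1 := by
  have hx : w x = 1 := by rwa [Fintype.sum_eq_single x hsupp] at hw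
  funext i
  rcases eq_or_ne i x with rfl | hi
  · simp [hx]
  · simp [hsupp i hi, hi]

theorem sum_pi_single_one_mul {ι : Type*} [Fintype ι] [DecidableEq ι] (x : ι) (F : ι → ℝ) :
    ∑ i, (Pi.single x 1 : ι → ℝ) i * F i = F x := by
  simp [Pi.single_apply]

theorem isJointDist_pi_single {A : Type*} [Fintype A] [DecidableEq A] (x : A × A) :
    IsJointDist (Pi.single x (1 : ℝ)) :=
  ⟨fun p => by by_cases hp : p = x <;> simp [hp], Fintype.sum_pi_single' x 1⟩

section SeparableGame

variable {A : Type*} [Fintype A] {τ : A × A → ℝ}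

theorem isCCE_separable_iff (hτ : ∑ p, τ p = 1) (f g h k : A → ℝ) :
    IsCCE τ (fun a b => f a + g b) (fun a b => h a + k b) ↔
      (∀ a', ∑ p, τ p * (f a' - f p.1) ≤ 0) ∧ (∀ b', ∑ p, τ p * (k p.2 - k b') ≤ 0) := by
  simp only [IsCCE, mul_add, mul_sub, sum_add_distrib, sum_sub_distrib, ← sum_mul, hτ, one_mul,
    add_le_add_iff_left, add_le_add_iff_right, sub_nonpos]

variable [DecidableEq A] {f g h k : A → ℝ} {a₀ b₀ : A}

theorem isCCE_separable_iff_eq_pi_single (hf : ∀ a ≠ a₀, f a < f a₀)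
    (hk : ∀ b ≠ b₀, k b₀ < k b) (hτ : IsJointDist τ) :
    IsCCE τ (fun a b => f a + g b) (fun a b => h a + k b) ↔ τ = Pi.single (a₀, b₀) 1 := by
  have hf_le : ∀ a, f a ≤ f a₀ := fun a =>
    (eq_or_ne a a₀).elim (fun ha => ha ▸ le_rfl) fun ha => (hf a ha).le
  have hk_le : ∀ b, k b₀ ≤ k b := fun b =>
    (eq_or_ne b b₀).elim (fun hb => hb ▸ le_rfl) fun hb => (hk b hb).le
  rw [isCCE_separable_iff hτ.2]
  constructor
  · rintro ⟨hregret₁, hregret₂⟩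
    refine eq_pi_single_of_sum_eq_one hτ.2 fun p hp => ?_
    by_cases ha : p.1 = a₀
    · have hb : p.2 ≠ b₀ := fun hb => hp (Prod.ext ha hb)
      exact weight_eq_zero_of_sum_mul_nonpos hτ.1 (fun q => sub_nonneg.2 (hk_le q.2))
        (hregret₂ b₀) (sub_pos.2 (hk _ hb))
    · exact weight_eq_zero_of_sum_mul_nonpos hτ.1 (fun q => sub_nonneg.2 (hf_le q.1))
        (hregret₁ a₀) (sub_pos.2 (hf _ ha))
  · rintro rfl
    refine ⟨fun a' => ?_, fun b' => ?_⟩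
    · rw [sum_pi_single_one_mul (F := fun p : A × A => f a' - f p.1)]
      exact sub_nonpos.2 (hf_le a')
    · rw [sum_pi_single_one_mul (F := fun p : A × A => k p.2 - k b')]
      exact sub_nonpos.2 (hk_le b')

end SeparableGame

/-- With `δ = ε` and `δ = -ε` these are the matrices `u₁, u₂` and `u₁', u₂'` of the paper. -/
def tiltedPayoff₁ (δ : ℝ) (a b : Fin 2) : ℝ := (if a = 0 then δ else 0) + if b = 0 then 1 else 0

def tiltedPayoff₂ (δ : ℝ) (a b : Fin 2) : ℝ := (if a = 0 then -1 else 0) + if b = 0 then -δ else 0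

section TiltedGame

variable {δ : ℝ} {τ : Fin 2 × Fin 2 → ℝ}

theorem isCCE_tiltedPayoff_iff_of_pos (hδ : 0 < δ) (hτ : IsJointDist τ) :
    IsCCE τ (tiltedPayoff₁ δ) (tiltedPayoff₂ δ) ↔ τ = Pi.single (0, 0) 1 :=
  isCCE_separable_iff_eq_pi_single (f := fun a => if a = 0 then δ else 0)
    (k := fun b => if b = 0 then -δ else 0) (fun a ha => by simp [ha, hδ])
    (fun b hb => by simp [hb, hδ]) hτ

theorem isCCE_tiltedPayoff_iff_of_neg (hδ : δ < 0) (hτ : IsJointDist τ) :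
    IsCCE τ (tiltedPayoff₁ δ) (tiltedPayoff₂ δ) ↔ τ = Pi.single (1, 1) 1 :=
  isCCE_separable_iff_eq_pi_single (f := fun a => if a = 0 then δ else 0)
    (k := fun b => if b = 0 then -δ else 0) (fun a ha => by fin_cases a <;> simp_all)
    (fun b hb => by fin_cases b <;> simp_all) hτ

theorem abs_tiltedPayoff₁_sub_le (hδ : 0 ≤ δ) (a b : Fin 2) :
    |tiltedPayoff₁ δ a b - tiltedPayoff₁ (-δ) a b| ≤ 2 * δ := by
  unfold tiltedPayoff₁
  split_ifs <;> rw [abs_le] <;> constructor <;> linarith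

theorem abs_tiltedPayoff₂_sub_le (hδ : 0 ≤ δ) (a b : Fin 2) :
    |tiltedPayoff₂ δ a b - tiltedPayoff₂ (-δ) a b| ≤ 2 * δ := by
  unfold tiltedPayoff₂
  split_ifs <;> rw [abs_le] <;> constructor <;> linarith

end TiltedGame

/-- The CCE value of a general-sum game is not Lipschitz in the payoff matrices:
there exist `2×2` games `(u₁,u₂)` and `(u₁',u₂')`, each with a unique CCE,
whose payoffs are `2ε`-close in sup norm but whose unique CCE values differ by
at least `1` for some player. -/
theorem cce_value_not_lipschitz (ε : ℝ) (hε : 0 < ε) :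
    ∃ (u1 u2 u1' u2' : Fin 2 → Fin 2 → ℝ) (σ σ' : Fin 2 × Fin 2 → ℝ),
      IsJointDist σ ∧ IsCCE σ u1 u2 ∧
        (∀ τ, IsJointDist τ → IsCCE τ u1 u2 → τ = σ) ∧
      IsJointDist σ' ∧ IsCCE σ' u1' u2' ∧
        (∀ τ, IsJointDist τ → IsCCE τ u1' u2' → τ = σ') ∧
      (∀ a b, |u1 a b - u1' a b| ≤ 2 * ε ∧ |u2 a b - u2' a b| ≤ 2 * ε) ∧
      1 ≤ max |(∑ p : Fin 2 × Fin 2, σ p * u1 p.1 p.2) - ∑ p : Fin 2 × Fin 2, σ' p * u1' p.1 p.2|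
              |(∑ p : Fin 2 × Fin 2, σ p * u2 p.1 p.2) - ∑ p : Fin 2 × Fin 2, σ' p * u2' p.1 p.2| := by
  have hunique := fun τ (hτ : IsJointDist τ) => isCCE_tiltedPayoff_iff_of_pos hε hτ
  have hunique' := fun τ (hτ : IsJointDist τ) =>
    isCCE_tiltedPayoff_iff_of_neg (neg_lt_zero.2 hε) hτ
  refine ⟨_, _, _, _, _, _, isJointDist_pi_single _, (hunique _ (isJointDist_pi_single _)).2 rfl,
    fun τ hτ => (hunique τ hτ).1, isJointDist_pi_single _,
    (hunique' _ (isJointDist_pi_single _)).2 rfl, fun τ hτ => (hunique' τ hτ).1,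
    fun a b => ?_, ?_⟩
  · exact ⟨abs_tiltedPayoff₁_sub_le hε.le a b, abs_tiltedPayoff₂_sub_le hε.le a b⟩
  · refine le_max_of_le_left ?_
    rw [sum_pi_single_one_mul (F := fun p : Fin 2 × Fin 2 => tiltedPayoff₁ ε p.1 p.2),
      sum_pi_single_one_mul (F := fun p : Fin 2 × Fin 2 => tiltedPayoff₁ (-ε) p.1 p.2)]
    simp only [tiltedPayoff₁, Fin.isValue, ↓reduceIte, one_ne_zero, add_zero, sub_zero]
    exact le_abs.2 (Or.inl (by linarith))
end

section
/- (Boundedness of least-squares coefficients) Let φ_τ ∈ ℝ^d with ‖φ_τ‖ ≤ 1 for τ = 1,…,k−1, let Λ = I + Σ_{τ=1}^{k-1} φ_τ φ_τ^⊤, and let y_τ ∈ ℝ with |y_τ| ≤ 2H. Then the vector w = Λ^{-1} Σ_{τ=1}^{k-1} φ_τ y_τ satisfies ‖w‖ ≤ 2H√(dk). -/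
/-!
Write `A = Λ⁻¹` and `u = Σ_τ y_τ φ_τ`, so that `w = A u`. Since `Λ ⪰ I`,
`‖w‖² ≤ wᵀ Λ w = uᵀ A u`. As `A ⪰ 0`, `x ↦ √(xᵀ A x)` is a seminorm, hence
`√(uᵀ A u) ≤ Σ_τ |y_τ| ‖φ_τ‖_A ≤ 2H √((k - 1) Σ_τ ‖φ_τ‖²_A)` by Cauchy–Schwarz, and
`Σ_τ ‖φ_τ‖²_A = tr((Λ - I) Λ⁻¹) = d - tr Λ⁻¹ ≤ d`.
-/

open Finset Matrix

namespace Matrix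

variable {n ι : Type*} [Fintype n]

theorem posSemidef_sum_vecMulVec_self (s : Finset ι) (φ : ι → n → ℝ) :
    (∑ τ ∈ s, vecMulVec (φ τ) (φ τ)).PosSemidef :=
  posSemidef_sum s fun τ _ => by simpa using posSemidef_vecMulVec_self_star (φ τ)

open scoped MatrixOrder in
theorem PosSemidef.exists_dotProduct_mulVec_eq_norm_sq {A : Matrix n n ℝ} (hA : A.PosSemidef) :
    ∃ B : Matrix n n ℝ, ∀ x, x ⬝ᵥ (A *ᵥ x) = ‖WithLp.toLp 2 (B *ᵥ x)‖ ^ 2 := by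
  classical
  obtain ⟨B, rfl⟩ := CStarAlgebra.nonneg_iff_eq_star_mul_self.mp hA.nonneg
  refine ⟨B, fun x => ?_⟩
  rw [← mulVec_mulVec, dotProduct_mulVec, star_eq_conjTranspose, vecMul_conjTranspose,
    star_trivial, EuclideanSpace.real_norm_sq_eq, dotProduct]
  simp [sq]

theorem PosSemidef.sqrt_dotProduct_mulVec_sum_le {A : Matrix n n ℝ} (hA : A.PosSemidef)
    (s : Finset ι) (c : ι → ℝ) (v : ι → n → ℝ) :
    √((∑ τ ∈ s, c τ • v τ) ⬝ᵥ (A *ᵥ ∑ τ ∈ s, c τ • v τ)) ≤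
      ∑ τ ∈ s, |c τ| * √(v τ ⬝ᵥ (A *ᵥ v τ)) := by
  obtain ⟨B, hB⟩ := hA.exists_dotProduct_mulVec_eq_norm_sq
  rw [hB]
  simp only [hB, Real.sqrt_sq (norm_nonneg _), mulVec_sum, mulVec_smul, WithLp.toLp_sum,
    WithLp.toLp_smul]
  exact (norm_sum_le _ _).trans_eq (by simp only [norm_smul, Real.norm_eq_abs])

variable [DecidableEq n]

theorem PosSemidef.dotProduct_self_le_dotProduct_inv_one_add_mulVec {M : Matrix n n ℝ}
    (hM : M.PosSemidef) (u : n → ℝ) :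
    ((1 + M)⁻¹ *ᵥ u) ⬝ᵥ ((1 + M)⁻¹ *ᵥ u) ≤ u ⬝ᵥ ((1 + M)⁻¹ *ᵥ u) := by
  set w := (1 + M)⁻¹ *ᵥ u
  have hdet : IsUnit (1 + M).det := (PosDef.one.add_posSemidef hM).isUnit.map detMonoidHom
  have hw : (1 + M) *ᵥ w = u := by
    rw [mulVec_mulVec, mul_nonsing_inv _ hdet, one_mulVec]
  calc w ⬝ᵥ w ≤ w ⬝ᵥ w + w ⬝ᵥ (M *ᵥ w) :=
        le_add_of_nonneg_right (by simpa using hM.dotProduct_mulVec_nonneg w)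
    _ = w ⬝ᵥ ((1 + M) *ᵥ w) := by rw [add_mulVec, one_mulVec, dotProduct_add]
    _ = u ⬝ᵥ w := by rw [hw, dotProduct_comm]

theorem sum_dotProduct_inv_mulVec_le_card (s : Finset ι) (φ : ι → n → ℝ) :
    ∑ τ ∈ s, φ τ ⬝ᵥ ((1 + ∑ τ ∈ s, vecMulVec (φ τ) (φ τ))⁻¹ *ᵥ φ τ) ≤ Fintype.card n := by
  set M := ∑ τ ∈ s, vecMulVec (φ τ) (φ τ)
  have hΛ := PosDef.one.add_posSemidef (posSemidef_sum_vecMulVec_self s φ)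
  have hdet : IsUnit (1 + M).det := hΛ.isUnit.map detMonoidHom
  have hterm (x : n → ℝ) : x ⬝ᵥ ((1 + M)⁻¹ *ᵥ x) = trace (vecMulVec x x * (1 + M)⁻¹) := by
    rw [vecMulVec_mul, trace_vecMulVec, dotProduct_mulVec, dotProduct_comm]
  have hMA : M * (1 + M)⁻¹ = 1 - (1 + M)⁻¹ := by
    rw [eq_sub_iff_add_eq, ← add_one_mul, add_comm M, mul_nonsing_inv _ hdet]
  calc ∑ τ ∈ s, φ τ ⬝ᵥ ((1 + M)⁻¹ *ᵥ φ τ) = trace (M * (1 + M)⁻¹) := by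
        simp only [hterm, M, sum_mul, trace_sum]
    _ = Fintype.card n - trace (1 + M)⁻¹ := by rw [hMA, trace_sub, trace_one]
    _ ≤ Fintype.card n := sub_le_self _ hΛ.inv.posSemidef.trace_nonneg

end Matrix

theorem Real.sum_sqrt_le_sqrt_card_mul_sum {ι : Type*} (s : Finset ι) {f : ι → ℝ}
    (hf : ∀ i ∈ s, 0 ≤ f i) : ∑ i ∈ s, √(f i) ≤ √(#s * ∑ i ∈ s, f i) := by
  refine Real.le_sqrt_of_sq_le ?_
  calc (∑ i ∈ s, √(f i)) ^ 2 ≤ #s * ∑ i ∈ s, √(f i) ^ 2 := sq_sum_le_card_mul_sum_sq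
    _ = #s * ∑ i ∈ s, f i := by rw [sum_congr rfl fun i hi => Real.sq_sqrt (hf i hi)]

theorem least_squares_coefficients_bounded_general {d k : ℕ} (H : ℝ) (hH : 0 ≤ H)
    (φ : Fin (k - 1) → Fin d → ℝ) (y : Fin (k - 1) → ℝ)
    (hy : ∀ τ, |y τ| ≤ 2 * H)
    (Λ : Matrix (Fin d) (Fin d) ℝ)
    (hΛ : Λ = (1 : Matrix (Fin d) (Fin d) ℝ) + ∑ τ, vecMulVec (φ τ) (φ τ))
    (w : Fin d → ℝ)
    (hw : w = Λ⁻¹ *ᵥ (∑ τ, y τ • φ τ)) :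
    Real.sqrt (∑ i, (w i) ^ 2) ≤ 2 * H * Real.sqrt (d * k) := by
  have hM := posSemidef_sum_vecMulVec_self univ φ
  have hA : Λ⁻¹.PosSemidef := hΛ ▸ (PosDef.one.add_posSemidef hM).inv.posSemidef
  have hφA (τ) : 0 ≤ φ τ ⬝ᵥ (Λ⁻¹ *ᵥ φ τ) := by simpa using hA.dotProduct_mulVec_nonneg (φ τ)
  have hsum : ((k - 1 : ℕ) : ℝ) * ∑ τ, φ τ ⬝ᵥ (Λ⁻¹ *ᵥ φ τ) ≤ d * k := by
    rw [mul_comm]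
    gcongr
    · simpa [hΛ] using sum_dotProduct_inv_mulVec_le_card univ φ
    · exact Nat.sub_le k 1
  calc √(∑ i, w i ^ 2) = √(w ⬝ᵥ w) := by simp only [dotProduct, sq]
    _ ≤ √((∑ τ, y τ • φ τ) ⬝ᵥ (Λ⁻¹ *ᵥ ∑ τ, y τ • φ τ)) := by
        gcongr
        subst hΛ hw
        exact hM.dotProduct_self_le_dotProduct_inv_one_add_mulVec _
    _ ≤ ∑ τ, |y τ| * √(φ τ ⬝ᵥ (Λ⁻¹ *ᵥ φ τ)) := hA.sqrt_dotProduct_mulVec_sum_le _ y φ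
    _ ≤ 2 * H * ∑ τ, √(φ τ ⬝ᵥ (Λ⁻¹ *ᵥ φ τ)) := by
        rw [mul_sum]
        gcongr with τ
        exact hy τ
    _ ≤ 2 * H * √(d * k) := by
        gcongr
        refine (Real.sum_sqrt_le_sqrt_card_mul_sum univ fun τ _ => hφA τ).trans ?_
        simpa using Real.sqrt_le_sqrt hsum

/-- Boundedness of least-squares coefficients: with `‖φ_τ‖ ≤ 1`, `|y_τ| ≤ 2H`
(`τ = 1, …, k-1`) and `Λ = I + Σ_τ φ_τ φ_τ^⊤`, the least-squares vector
`w = Λ⁻¹ Σ_τ y_τ φ_τ` satisfies `‖w‖ ≤ 2H√(dk)`. -/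
theorem least_squares_coefficients_bounded {d k : ℕ} (H : ℝ) (hH : 0 ≤ H)
    (φ : Fin (k - 1) → Fin d → ℝ) (y : Fin (k - 1) → ℝ)
    (hφ : ∀ τ, Real.sqrt (∑ i, (φ τ i) ^ 2) ≤ 1)
    (hy : ∀ τ, |y τ| ≤ 2 * H)
    (Λ : Matrix (Fin d) (Fin d) ℝ)
    (hΛ : Λ = (1 : Matrix (Fin d) (Fin d) ℝ) + ∑ τ, vecMulVec (φ τ) (φ τ))
    (w : Fin d → ℝ)
    (hw : w = Λ⁻¹ *ᵥ (∑ τ, y τ • φ τ)) :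
    Real.sqrt (∑ i, (w i) ^ 2) ≤ 2 * H * Real.sqrt (d * k) :=
  least_squares_coefficients_bounded_general H hH φ y hy Λ hΛ w hw
end

section
/- (Elliptical potential lemma) Let {φ_t}_{t≥1} ⊆ ℝ^d with ‖φ_t‖ ≤ 1 for all t, let Λ₀ ∈ ℝ^{d×d} be positive definite with smallest eigenvalue λ_min(Λ₀) ≥ 1, and let Λ_t = Λ₀ + Σ_{i=1}^t φ_i φ_i^⊤. Then for all t, log(det Λ_t / det Λ₀) ≤ Σ_{j=1}^t φ_j^⊤ Λ_{j-1}^{-1} φ_j ≤ 2 log(det Λ_t / det Λ₀). -/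
open Finset Matrix

/-!
Put `x_j = φ_jᵀ Λ_{j-1}⁻¹ φ_j`. By the matrix determinant lemma `det Λ_j = det Λ_{j-1} (1 + x_j)`,
so `log (det Λ_t / det Λ₀) = ∑_j log (1 + x_j)`. Since `Λ_{j-1} ≥ Λ₀ ≥ I`, we have
`0 ≤ x_j ≤ ‖φ_j‖² ≤ 1`, and the two bounds are `x / 2 ≤ log (1 + x) ≤ x` on `[0, 1]`.
-/

theorem Real.le_two_mul_log_one_add {x : ℝ} (h0 : 0 ≤ x) (h2 : x ≤ 2) :
    x ≤ 2 * Real.log (1 + x) := by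
  have hlog := Real.le_log_one_add_of_nonneg h0
  rw [div_le_iff₀ (by linarith)] at hlog
  nlinarith

namespace Matrix

variable {n : Type*} [Fintype n]

theorem posSemidef_vecMulVec_self (v : n → ℝ) : (vecMulVec v v).PosSemidef := by
  simpa using posSemidef_vecMulVec_star_self v

variable [DecidableEq n]

theorem det_add_vecMulVec {R : Type*} [CommRing R] {A : Matrix n n R} (hA : IsUnit A.det)
    (u v : n → R) : (A + vecMulVec u v).det = A.det * (1 + v ⬝ᵥ (A⁻¹ *ᵥ u)) := by
  rw [vecMulVec_eq Unit, det_add_replicateCol_mul_replicateRow hA, Matrix.mul_assoc,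
    ← replicateCol_mulVec]
  simp [det_unique]

theorem PosDef.dotProduct_inv_mulVec_le {A : Matrix n n ℝ} (hA : A.PosDef)
    (hA1 : (A - 1).PosSemidef) (v : n → ℝ) : v ⬝ᵥ (A⁻¹ *ᵥ v) ≤ v ⬝ᵥ v := by
  set ψ := A⁻¹ *ᵥ v
  have hAψ : A *ᵥ ψ = v := by
    rw [mulVec_mulVec, mul_nonsing_inv _ hA.det_pos.ne'.isUnit, one_mulVec]
  have hψψ : ψ ⬝ᵥ ψ ≤ v ⬝ᵥ ψ := by
    have h := hA1.dotProduct_mulVec_nonneg ψ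
    rw [star_trivial, sub_mulVec, one_mulVec, hAψ, dotProduct_sub, dotProduct_comm ψ v] at h
    linarith
  have hcs : (v ⬝ᵥ ψ) ^ 2 ≤ (v ⬝ᵥ v) * (ψ ⬝ᵥ ψ) := by
    simpa [dotProduct, sq] using sum_mul_sq_le_sq_mul_sq univ v ψ
  have hx0 : 0 ≤ v ⬝ᵥ ψ := by
    simpa using hA.inv.posSemidef.dotProduct_mulVec_nonneg v
  have hvv : 0 ≤ v ⬝ᵥ v := by simpa using dotProduct_star_self_nonneg v
  nlinarith

theorem det_eq_det_mul_prod_of_add_vecMulVec {R : Type*} [CommRing R] (φ : ℕ → n → R)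
    (Λ : ℕ → Matrix n n R) (hstep : ∀ t, Λ (t + 1) = Λ t + vecMulVec (φ (t + 1)) (φ (t + 1)))
    (hunit : ∀ t, IsUnit (Λ t).det) (t : ℕ) :
    (Λ t).det = (Λ 0).det * ∏ j ∈ Icc 1 t, (1 + φ j ⬝ᵥ ((Λ (j - 1))⁻¹ *ᵥ φ j)) := by
  induction t with
  | zero => simp
  | succ t ih =>
    rw [prod_Icc_succ_top (by omega), ← mul_assoc, ← ih, hstep, det_add_vecMulVec (hunit t),
      Nat.add_sub_cancel]

end Matrix

/-- Elliptical potential lemma: with `‖φ_t‖ ≤ 1`, `Λ₀` positive definite with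
smallest eigenvalue at least 1 (i.e. `Λ₀ - I` is positive semidefinite), and
`Λ_t = Λ₀ + Σ_{i=1}^t φ_i φ_i^⊤`, for every `t`:
`log(det Λ_t / det Λ₀) ≤ Σ_{j=1}^t φ_j^⊤ Λ_{j-1}⁻¹ φ_j ≤ 2 log(det Λ_t / det Λ₀)`. -/
theorem elliptical_potential {d : ℕ} (φ : ℕ → Fin d → ℝ)
    (hφ : ∀ t, Real.sqrt (∑ i, (φ t i) ^ 2) ≤ 1)
    (Λ₀ : Matrix (Fin d) (Fin d) ℝ) (hΛ₀ : Λ₀.PosDef)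
    (hmin : (Λ₀ - 1).PosSemidef)
    (Λ : ℕ → Matrix (Fin d) (Fin d) ℝ)
    (hΛ : ∀ t, Λ t = Λ₀ + ∑ i ∈ Finset.Icc 1 t, vecMulVec (φ i) (φ i)) :
    ∀ t, Real.log ((Λ t).det / Λ₀.det) ≤
        (∑ j ∈ Finset.Icc 1 t, φ j ⬝ᵥ ((Λ (j - 1))⁻¹ *ᵥ φ j)) ∧
      (∑ j ∈ Finset.Icc 1 t, φ j ⬝ᵥ ((Λ (j - 1))⁻¹ *ᵥ φ j)) ≤
        2 * Real.log ((Λ t).det / Λ₀.det) := by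
  have hstep : ∀ t, Λ (t + 1) = Λ t + vecMulVec (φ (t + 1)) (φ (t + 1)) := fun t => by
    rw [hΛ, hΛ, sum_Icc_succ_top (by omega), add_assoc]
  have hgram : ∀ t, (∑ i ∈ Icc 1 t, vecMulVec (φ i) (φ i)).PosSemidef := fun t =>
    posSemidef_sum _ fun i _ => posSemidef_vecMulVec_self (φ i)
  have hpd : ∀ t, (Λ t).PosDef := fun t => hΛ t ▸ hΛ₀.add_posSemidef (hgram t)
  have hge1 : ∀ t, (Λ t - 1).PosSemidef := fun t => by
    rw [hΛ, add_sub_right_comm]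
    exact hmin.add (hgram t)
  set x : ℕ → ℝ := fun j => φ j ⬝ᵥ ((Λ (j - 1))⁻¹ *ᵥ φ j)
  have hx0 : ∀ j, 0 ≤ x j := fun j => by
    simpa using (hpd (j - 1)).inv.posSemidef.dotProduct_mulVec_nonneg (φ j)
  have hx1 : ∀ j, x j ≤ 1 := fun j => ((hpd _).dotProduct_inv_mulVec_le (hge1 _) (φ j)).trans
    (by simpa [dotProduct, sq] using Real.sqrt_le_one.mp (hφ j))
  have hlog : ∀ t, Real.log ((Λ t).det / Λ₀.det) = ∑ j ∈ Icc 1 t, Real.log (1 + x j) := by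
    intro t
    rw [det_eq_det_mul_prod_of_add_vecMulVec φ Λ hstep (fun t => (hpd t).det_pos.ne'.isUnit),
      show Λ 0 = Λ₀ by simp [hΛ], mul_div_cancel_left₀ _ hΛ₀.det_pos.ne',
      Real.log_prod fun j _ => (by linarith [hx0 j] : 0 < 1 + x j).ne']
  intro t
  rw [hlog, mul_sum]
  refine ⟨sum_le_sum fun j _ => ?_, sum_le_sum fun j _ => ?_⟩
  · linarith [Real.log_le_sub_one_of_pos (by linarith [hx0 j] : 0 < 1 + x j)]
  · exact Real.le_two_mul_log_one_add (hx0 j) (by linarith [hx1 j])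
end
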